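/- arXiv:2110.09340 — 2 statements merged into one kernel-verified Lean document; each statement's English description precedes it below -/
import Mathlib

section
/- For every (k,m) ∈ ℕ × ℕ* with k+m−1 ≥ 2, the maps F_{k,m} : ℳ_{k,m} → ℳ_{k,m} and G_{k,m} : ℂ^{k+m−1} → ℂ^{k+m−1} are conjugate: there exists a linear isomorphism h : ℳ_{k,m} → ℂ^{k+m−1} such that h ∘ F_{k,m} = G_{k,m} ∘ h on ℳ_{k,m}. -/
noncomputable section

/-- Model of the space `𝓔 = ℂ^{ℕ*}` of complex sequences `(x_i)_{i ≥ 1}`: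
functions `ℕ → ℂ` with a dummy coordinate `x 0` which encodes the convention `x₀ := 0`. -/
abbrev Eseq : Type := ℕ → ℂ

/-- The submodule of `ℕ → ℂ` corresponding to `𝓔` (dummy coordinate `0` vanishes). -/
def E0 : Submodule ℂ Eseq where
  carrier := {x | x 0 = 0}
  add_mem' := by
    rintro a b ha hb
    simp only [Set.mem_setOf_eq, Pi.add_apply] at *
    rw [ha, hb]; ring
  zero_mem' := rfl
  smul_mem' := by
    rintro c a ha
    simp only [Set.mem_setOf_eq, Pi.smul_apply] at *
    rw [ha, smul_zero]

/-- `𝓛`: the subspace of constant sequences. -/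
def Lconst : Submodule ℂ Eseq where
  carrier := {x | x 0 = 0 ∧ ∀ i, 1 ≤ i → x i = x 1}
  add_mem' := by
    rintro a b ⟨ha0, ha⟩ ⟨hb0, hb⟩
    exact ⟨by simp [ha0, hb0], fun i hi => by simp only [Pi.add_apply, ha i hi, hb i hi]⟩
  zero_mem' := ⟨rfl, fun i _ => rfl⟩
  smul_mem' := by
    rintro c a ⟨ha0, ha⟩
    exact ⟨by simp [ha0], fun i hi => by simp only [Pi.smul_apply, ha i hi]⟩

/-- `ℋ_{k,m} = {x ∈ 𝓔 : β x_{k+m} − x_k = 0}` (convention `x₀ := 0`). -/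
def Hspace (β : ℂ) (k m : ℕ) : Submodule ℂ Eseq where
  carrier := {x | x 0 = 0 ∧ β * x (k + m) - x k = 0}
  add_mem' := by
    rintro a b ⟨ha0, ha⟩ ⟨hb0, hb⟩
    refine ⟨by simp [ha0, hb0], ?_⟩
    simp only [Pi.add_apply]
    linear_combination ha + hb
  zero_mem' := ⟨rfl, by simp⟩
  smul_mem' := by
    rintro c a ⟨ha0, ha⟩
    refine ⟨by simp [ha0], ?_⟩
    simp only [Pi.smul_apply, smul_eq_mul]
    linear_combination c * ha

/-- `𝓟_{k,m} = {x ∈ 𝓔 : x_{i+m} = x_i for all i ≥ k+1}`. -/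
def Pspace (k m : ℕ) : Submodule ℂ Eseq where
  carrier := {x | x 0 = 0 ∧ ∀ i, k + 1 ≤ i → x (i + m) = x i}
  add_mem' := by
    rintro a b ⟨ha0, ha⟩ ⟨hb0, hb⟩
    exact ⟨by simp [ha0, hb0], fun i hi => by simp only [Pi.add_apply, ha i hi, hb i hi]⟩
  zero_mem' := ⟨rfl, fun i _ => rfl⟩
  smul_mem' := by
    rintro c a ⟨ha0, ha⟩
    exact ⟨by simp [ha0], fun i hi => by simp only [Pi.smul_apply, ha i hi]⟩

/-- `ℳ_{k,m} = 𝓟_{k,m} ∩ ℋ_{k,m}`. -/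
def Mspace (β : ℂ) (k m : ℕ) : Submodule ℂ Eseq := Pspace k m ⊓ Hspace β k m

/-- `Q : 𝓔 → 𝓔`, `Q(x)_1 = 0`, `Q(x)_i = x_{i-1}^d` for `i ≥ 2`. -/
def Qmap (d : ℕ) (x : Eseq) : Eseq := fun i => if 2 ≤ i then (x (i - 1)) ^ d else 0

/-- The constant subtracted by the projection `π_{k,m}` onto `ℋ_{k,m}` parallel to `𝓛`. -/
def kappa (β : ℂ) (k m : ℕ) (x : Eseq) : ℂ :=
  if k = 0 then x m else (β * x (k + m) - x k) / (β - 1)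

/-- `π_{k,m} : 𝓔 → 𝓔`, the projection onto `ℋ_{k,m}` parallel to `𝓛`. -/
def projH (β : ℂ) (k m : ℕ) (x : Eseq) : Eseq :=
  fun i => if i = 0 then 0 else x i - kappa β k m x

/-- `F_{k,m} = π_{k,m} ∘ Q`. -/
def Fmap (β : ℂ) (d k m : ℕ) (x : Eseq) : Eseq := projH β k m (Qmap d x)

/-- The coordinate linear form `ω_i` on `ℳ_{k,m}`. -/
def omegaForm (β : ℂ) (k m : ℕ) (i : ℕ) : Module.Dual ℂ (Mspace β k m) where
  toFun v := (v : Eseq) i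
  map_add' a b := rfl
  map_smul' c a := rfl

/-- `L` is the derivative `D_x F_{k,m} : ℳ_{k,m} → ℳ_{k,m}` of `F_{k,m}` at `x`:
in every direction `v ∈ ℳ_{k,m}` and coordinate `i`, `L v` is the derivative at `t = 0`
of `t ↦ F_{k,m}(x + t v)_i`. -/
def IsDerivAt (β : ℂ) (d k m : ℕ) (x : Eseq)
    (L : Mspace β k m →ₗ[ℂ] Mspace β k m) : Prop :=
  ∀ v : Mspace β k m, ∀ i : ℕ,
    ((L v : Eseq) i) = deriv (fun t : ℂ => Fmap β d k m (x + t • (v : Eseq)) i) 0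

/-- The critical set `C(F_{k,m})`: points of `ℳ_{k,m}` where the derivative is not invertible. -/
def CsetD (β : ℂ) (d k m : ℕ) : Set Eseq :=
  {x | x ∈ Mspace β k m ∧
    ∀ L : Mspace β k m →ₗ[ℂ] Mspace β k m, IsDerivAt β d k m x L → ¬ Function.Bijective L}

/-- The post-critical set `PC(F_{k,m}) = ⋃_{j ≥ 1} F_{k,m}^{∘j}(C(F_{k,m}))`. -/
def PCsetD (β : ℂ) (d k m : ℕ) : Set Eseq :=
  ⋃ j : ℕ, ⋃ _ : 1 ≤ j, (Fmap β d k m)^[j] '' CsetD β d k m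

/-- `Δ_{k,m} = {x ∈ ℳ_{k,m} : x_i = x_j for some 1 ≤ i < j ≤ k+m}`. -/
def Delta (β : ℂ) (k m : ℕ) : Set Eseq :=
  {x | x ∈ Mspace β k m ∧ ∃ i j : ℕ, 1 ≤ i ∧ i < j ∧ j ≤ k + m ∧ x i = x j}

/-- Coordinates of a point of `ℂ^n`, indexed from `1` to `n`, with the convention `x₀ := 0`
(and value `0` out of range). -/
def coordFin {n : ℕ} (x : Fin n → ℂ) (i : ℕ) : ℂ :=
  if h : 1 ≤ i ∧ i ≤ n then x ⟨i - 1, by omega⟩ else 0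

/-- The Koch map `G_{k,m} : ℂ^{k+m-1} → ℂ^{k+m-1}`. -/
def Gmap (β : ℂ) (d k m : ℕ) (x : Fin (k + m - 1) → ℂ) : Fin (k + m - 1) → ℂ :=
  if k = 0 then
    fun j => (coordFin x j.1) ^ d - (coordFin x (m - 1)) ^ d
  else
    fun j =>
      (coordFin x j.1 - (β * coordFin x (k + m - 1) - coordFin x (k - 1)) / (β - 1)) ^ d

/-- The critical set `C(G_{k,m})`: points where the derivative is not invertible. -/
def Gcrit (β : ℂ) (d k m : ℕ) : Set (Fin (k + m - 1) → ℂ) :=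
  {z | ¬ Function.Bijective (fderiv ℂ (Gmap β d k m) z)}

/-- The post-critical set `PC(G_{k,m}) = ⋃_{j ≥ 1} G_{k,m}^{∘j}(C(G_{k,m}))`. -/
def GPC (β : ℂ) (d k m : ℕ) : Set (Fin (k + m - 1) → ℂ) :=
  ⋃ j : ℕ, ⋃ _ : 1 ≤ j, (Gmap β d k m)^[j] '' Gcrit β d k m

/-- The polynomial `P_z` associated to a point `z ∈ ℂ^{k+m-1}`. -/
def Ppoly (β : ℂ) (d k m : ℕ) (z : Fin (k + m - 1) → ℂ) : ℂ → ℂ :=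
  if k = 0 then fun t => t ^ d - (coordFin z (m - 1)) ^ d
  else fun t => (t - (β * coordFin z (k + m - 1) - coordFin z (k - 1)) / (β - 1)) ^ d

/-! A point of `𝓟_{k,m}` is determined by `x₁, …, x_{k+m}`, and the relation `β x_{k+m} = x_k`
of `ℋ_{k,m}` removes one more degree of freedom, so `ℳ_{k,m} ≅ ℂ^{k+m-1}`: for `k = 0` through
`x ↦ (x₁, …, x_{m-1})` (then `x_m = 0`), for `k ≥ 1` through `x ↦ (x_{i+1} - x₁)_{1 ≤ i < k+m}`,
where the relation recovers `x₁` as `-s`, `s` being the constant of the Koch map. Because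
`β^d = 1`, `Q` maps `ℳ_{k,m}` into `𝓟_{k,m}`; the projection `π_{k,m}` only subtracts a constant,
which these coordinates cancel (`k ≥ 1`) or read off as `x_{m-1}^d` (`k = 0`). -/

section Periodic

variable {α : Type*} (k m : ℕ)

/-- Folds an index into the window `0, …, k + m` along the period `m` beyond `k`. -/
def periodicIndex (i : ℕ) : ℕ :=
  if i ≤ k + m then i else k + 1 + (i - (k + 1)) % m

variable {k m}

lemma periodicIndex_of_le {i : ℕ} (hi : i ≤ k + m) : periodicIndex k m i = i :=
  if_pos hi

lemma periodicIndex_add (hm : 0 < m) {i : ℕ} (hi : k + 1 ≤ i) :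
    periodicIndex k m (i + m) = periodicIndex k m i := by
  have hshift : i + m - (k + 1) = i - (k + 1) + m := by omega
  unfold periodicIndex
  rw [if_neg (by omega), hshift, Nat.add_mod_right]
  split_ifs with h
  · rw [Nat.mod_eq_of_lt (by omega)]
    omega
  · rfl

lemma eq_of_periodic_of_eqOn {x y : ℕ → α} (hm : 0 < m)
    (hx : ∀ i, k + 1 ≤ i → x (i + m) = x i) (hy : ∀ i, k + 1 ≤ i → y (i + m) = y i)
    (h : ∀ i ≤ k + m, x i = y i) : x = y := by
  funext i
  induction i using Nat.strong_induction_on with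
  | _ i ih =>
    by_cases hi : i ≤ k + m
    · exact h i hi
    · obtain ⟨j, rfl⟩ : ∃ j, i = j + m := ⟨i - m, by omega⟩
      rw [hx j (by omega), hy j (by omega)]
      exact ih j (by omega)

end Periodic

lemma coordFin_zero {n : ℕ} (z : Fin n → ℂ) : coordFin z 0 = 0 :=
  dif_neg (by omega)

lemma coordFin_succ {n : ℕ} (z : Fin n → ℂ) (j : Fin n) : coordFin z (j + 1) = z j := by
  simp [coordFin, Nat.succ_le_of_lt j.2]

lemma coordFin_of_lt {n i : ℕ} (x : Fin n → ℂ) (hi : n < i) : coordFin x i = 0 :=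
  dif_neg (by omega)

lemma coordFin_eq_of_le {n i : ℕ} {x : Fin n → ℂ} {f : ℕ → ℂ}
    (hx : ∀ j : Fin n, x j = f (j + 1)) (hf : f 0 = 0) (hi : i ≤ n) : coordFin x i = f i := by
  unfold coordFin
  split_ifs with h
  · rw [hx]
    congr 1
    simp only
    omega
  · obtain rfl : i = 0 := by omega
    exact hf.symm

lemma mem_Mspace_iff {β : ℂ} {k m : ℕ} {x : Eseq} :
    x ∈ Mspace β k m ↔
      x 0 = 0 ∧ (∀ i, k + 1 ≤ i → x (i + m) = x i) ∧ β * x (k + m) = x k := by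
  change (_ ∧ _) ∧ (_ ∧ _) ↔ _
  rw [sub_eq_zero]
  tauto

lemma Qmap_apply {d : ℕ} (hd : d ≠ 0) {x : Eseq} (hx : x 0 = 0) {i : ℕ} (hi : 1 ≤ i) :
    Qmap d x i = x (i - 1) ^ d := by
  unfold Qmap
  split_ifs with h
  · rfl
  · obtain rfl : i = 1 := by omega
    simp [hx, hd]

lemma projH_sub_projH (β : ℂ) (k m : ℕ) (y : Eseq) {i j : ℕ} (hi : i ≠ 0) (hj : j ≠ 0) :
    projH β k m y i - projH β k m y j = y i - y j := by
  simp only [projH, if_neg hi, if_neg hj]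
  ring

lemma projH_mem_Hspace {β : ℂ} (hβ : β ≠ 1) (k m : ℕ) (y : Eseq) :
    projH β k m y ∈ Hspace β k m := by
  refine ⟨if_pos rfl, ?_⟩
  rcases Nat.eq_zero_or_pos k with rfl | hk
  · simp [projH, kappa]
  · have hβ' : β - 1 ≠ 0 := sub_ne_zero.mpr hβ
    simp only [projH, kappa, if_neg (by omega : k + m ≠ 0), if_neg hk.ne']
    field_simp
    ring

lemma Fmap_mem_Pspace {β : ℂ} {d k m : ℕ} (hd : d ≠ 0) (hβd : β ^ d = 1) {x : Eseq}
    (hx : x ∈ Mspace β k m) : Fmap β d k m x ∈ Pspace k m := by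
  obtain ⟨hx0, hper, hH⟩ := mem_Mspace_iff.mp hx
  refine ⟨rfl, fun i hi => ?_⟩
  rw [← sub_eq_zero, Fmap, projH_sub_projH _ _ _ _ (by omega) (by omega),
    Qmap_apply hd hx0 (by omega), Qmap_apply hd hx0 (by omega), sub_eq_zero]
  rcases hi.lt_or_eq with hi' | rfl
  · obtain ⟨j, rfl⟩ : ∃ j, i = j + 1 := ⟨i - 1, by omega⟩
    simp only [Nat.add_sub_cancel, Nat.add_right_comm j 1 m, hper j (by omega)]
  · simp only [Nat.add_sub_cancel, Nat.add_right_comm k 1 m, ← hH, mul_pow, hβd, one_mul]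

lemma Fmap_mem_Mspace {β : ℂ} {d k m : ℕ} (hd : d ≠ 0) (hβd : β ^ d = 1) (hβ : β ≠ 1)
    {x : Eseq} (hx : x ∈ Mspace β k m) : Fmap β d k m x ∈ Mspace β k m :=
  ⟨Fmap_mem_Pspace hd hβd hx, projH_mem_Hspace hβ k m _⟩

def kochCoord (k m : ℕ) : Eseq →ₗ[ℂ] (Fin (k + m - 1) → ℂ) where
  toFun x j := if k = 0 then x (j + 1) else x (j + 2) - x 1
  map_add' x y := by
    funext j
    simp only [Pi.add_apply]
    split_ifs <;> ring
  map_smul' c x := by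
    funext j
    simp only [Pi.smul_apply, smul_eq_mul, RingHom.id_apply]
    split_ifs <;> ring

lemma kochCoord_apply (k m : ℕ) (x : Eseq) (j : Fin (k + m - 1)) :
    kochCoord k m x j = if k = 0 then x (j + 1) else x (j + 2) - x 1 :=
  rfl

/-- The constant `s` of the Koch map `G_{k,m}`, for `k ≥ 1`. -/
def kochShift (β : ℂ) (k m : ℕ) (z : Fin (k + m - 1) → ℂ) : ℂ :=
  (β * coordFin z (k + m - 1) - coordFin z (k - 1)) / (β - 1)

lemma coordFin_kochCoord_zero {m : ℕ} {x : Eseq} (hx : x 0 = 0) {i : ℕ} (hi : i ≤ m - 1) :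
    coordFin (kochCoord 0 m x) i = x i :=
  coordFin_eq_of_le (fun _ => by rw [kochCoord_apply, if_pos rfl]) hx (by omega)

lemma coordFin_kochCoord_of_ne_zero {k m : ℕ} (hk : k ≠ 0) (x : Eseq) {i : ℕ}
    (hi : i ≤ k + m - 1) : coordFin (kochCoord k m x) i = x (i + 1) - x 1 :=
  coordFin_eq_of_le (f := fun i => x (i + 1) - x 1) (fun _ => if_neg hk) (sub_self _) hi

lemma kochShift_kochCoord {β : ℂ} (hβ : β ≠ 1) {k m : ℕ} (hk : k ≠ 0) {x : Eseq}
    (hH : β * x (k + m) = x k) : kochShift β k m (kochCoord k m x) = -x 1 := by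
  have hβ' : β - 1 ≠ 0 := sub_ne_zero.mpr hβ
  rw [kochShift, coordFin_kochCoord_of_ne_zero hk x le_rfl,
    coordFin_kochCoord_of_ne_zero hk x (by omega), Nat.sub_add_cancel (by omega),
    Nat.sub_add_cancel (by omega), div_eq_iff hβ']
  linear_combination hH

lemma kochCoord_Fmap {β : ℂ} {d k m : ℕ} (hd : d ≠ 0) (hβ : β ≠ 1) (hm : 0 < m) {x : Eseq}
    (hx : x ∈ Mspace β k m) :
    kochCoord k m (Fmap β d k m x) = Gmap β d k m (kochCoord k m x) := by
  obtain ⟨hx0, -, hH⟩ := mem_Mspace_iff.mp hx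
  funext j
  have hj : j.1 < k + m - 1 := j.2
  rcases eq_or_ne k 0 with rfl | hk
  · rw [Gmap, if_pos rfl, kochCoord_apply, if_pos rfl, coordFin_kochCoord_zero hx0 (by omega),
      coordFin_kochCoord_zero hx0 le_rfl, Fmap, projH, if_neg (by omega), kappa, if_pos rfl,
      Qmap_apply hd hx0 (by omega), Qmap_apply hd hx0 hm, Nat.add_sub_cancel]
  · have hQ1 : Qmap d x 1 = 0 := if_neg (by omega)
    rw [Gmap, if_neg hk, kochCoord_apply, if_neg hk, Fmap,
      projH_sub_projH _ _ _ _ (by omega) one_ne_zero, hQ1, sub_zero,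
      Qmap_apply hd hx0 (by omega), (by omega : (j : ℕ) + 2 - 1 = j + 1),
      coordFin_kochCoord_of_ne_zero hk x hj.le, ← kochShift,
      kochShift_kochCoord hβ hk hH, sub_neg_eq_add, sub_add_cancel]

/-- The first `k + m + 1` coordinates of the point of `ℳ_{k,m}` with Koch coordinates `z`. -/
def kochWindow (β : ℂ) (k m : ℕ) (z : Fin (k + m - 1) → ℂ) (i : ℕ) : ℂ :=
  if i = 0 then 0 else if k = 0 then coordFin z i else coordFin z (i - 1) - kochShift β k m z

def ofKochCoord (β : ℂ) (k m : ℕ) (z : Fin (k + m - 1) → ℂ) : Eseq :=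
  fun i => kochWindow β k m z (periodicIndex k m i)

lemma ofKochCoord_of_le (β : ℂ) {k m : ℕ} (z : Fin (k + m - 1) → ℂ) {i : ℕ} (hi : i ≤ k + m) :
    ofKochCoord β k m z i = kochWindow β k m z i := by
  rw [ofKochCoord, periodicIndex_of_le hi]

lemma ofKochCoord_add_period (β : ℂ) {k m : ℕ} (hm : 0 < m) (z : Fin (k + m - 1) → ℂ)
    {i : ℕ} (hi : k + 1 ≤ i) : ofKochCoord β k m z (i + m) = ofKochCoord β k m z i := by
  rw [ofKochCoord, ofKochCoord, periodicIndex_add hm hi]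

lemma ofKochCoord_mem {β : ℂ} (hβ : β ≠ 1) {k m : ℕ} (hm : 0 < m) (z : Fin (k + m - 1) → ℂ) :
    ofKochCoord β k m z ∈ Mspace β k m := by
  refine mem_Mspace_iff.mpr ⟨?_, fun i hi => ofKochCoord_add_period β hm z hi, ?_⟩
  · rw [ofKochCoord_of_le β z (Nat.zero_le _), kochWindow, if_pos rfl]
  rw [ofKochCoord_of_le β z le_rfl, ofKochCoord_of_le β z (by omega), kochWindow, kochWindow,
    if_neg (by omega)]
  rcases eq_or_ne k 0 with rfl | hk
  · rw [if_pos rfl, if_pos rfl, coordFin_of_lt z (by omega), mul_zero]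
  · have hβ' : β - 1 ≠ 0 := sub_ne_zero.mpr hβ
    rw [if_neg hk, if_neg hk, if_neg hk, kochShift]
    field_simp
    ring

lemma kochCoord_ofKochCoord (β : ℂ) {k m : ℕ} (z : Fin (k + m - 1) → ℂ) :
    kochCoord k m (ofKochCoord β k m z) = z := by
  funext j
  have hj : j.1 < k + m - 1 := j.2
  rw [kochCoord_apply]
  split_ifs with hk
  · rw [ofKochCoord_of_le β z (by omega), kochWindow, if_neg (by omega), if_pos hk,
      coordFin_succ]
  · rw [ofKochCoord_of_le β z (by omega), ofKochCoord_of_le β z (by omega), kochWindow,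
      kochWindow, if_neg (by omega), if_neg one_ne_zero, if_neg hk, if_neg hk,
      (by omega : (j : ℕ) + 2 - 1 = j + 1), coordFin_succ, Nat.sub_self, coordFin_zero]
    ring

lemma ofKochCoord_kochCoord {β : ℂ} (hβ : β ≠ 1) (hβ₀ : β ≠ 0) {k m : ℕ} (hm : 0 < m)
    {x : Eseq} (hx : x ∈ Mspace β k m) : ofKochCoord β k m (kochCoord k m x) = x := by
  obtain ⟨hx0, hper, hH⟩ := mem_Mspace_iff.mp hx
  refine eq_of_periodic_of_eqOn hm (fun i hi => ofKochCoord_add_period β hm _ hi) hper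
    fun i hi => ?_
  rw [ofKochCoord_of_le β _ hi, kochWindow]
  split_ifs with hi0 hk
  · rw [hi0, hx0]
  · subst hk
    rcases Nat.lt_or_ge i m with him | him
    · exact coordFin_kochCoord_zero hx0 (by omega)
    · obtain rfl : i = m := by omega
      rw [zero_add, hx0] at hH
      rw [coordFin_of_lt _ (by omega), ((mul_eq_zero.mp hH).resolve_left hβ₀)]
  · rw [coordFin_kochCoord_of_ne_zero hk x (by omega), kochShift_kochCoord hβ hk hH,
      Nat.sub_add_cancel (by omega)]
    ring

def kochCoordEquiv {β : ℂ} (hβ : β ≠ 1) (hβ₀ : β ≠ 0) (k : ℕ) {m : ℕ} (hm : 0 < m) :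
    Mspace β k m ≃ₗ[ℂ] (Fin (k + m - 1) → ℂ) where
  __ := (kochCoord k m).domRestrict (Mspace β k m)
  invFun z := ⟨ofKochCoord β k m z, ofKochCoord_mem hβ hm z⟩
  left_inv x := Subtype.ext (ofKochCoord_kochCoord hβ hβ₀ hm x.2)
  right_inv := kochCoord_ofKochCoord β

theorem stmt6_general (d : ℕ) (hd : 2 ≤ d) (β : ℂ) (hβd : β ^ d = 1) (hβ1 : β ≠ 1)
    (k m : ℕ) (hm : 1 ≤ m) :
    ∃ h : (Mspace β k m) ≃ₗ[ℂ] (Fin (k + m - 1) → ℂ),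
      ∀ x : Mspace β k m, ∃ hy : Fmap β d k m ↑x ∈ Mspace β k m,
        h ⟨Fmap β d k m ↑x, hy⟩ = Gmap β d k m (h x) := by
  have hd₀ : d ≠ 0 := by omega
  have hβ₀ : β ≠ 0 := (pow_ne_zero_iff hd₀).mp (hβd ▸ one_ne_zero)
  exact ⟨kochCoordEquiv hβ1 hβ₀ k hm, fun x =>
    ⟨Fmap_mem_Mspace hd₀ hβd hβ1 x.2, kochCoord_Fmap hd₀ hβ1 hm x.2⟩⟩

/-- `F_{k,m} : ℳ_{k,m} → ℳ_{k,m}` and `G_{k,m} : ℂ^{k+m-1} → ℂ^{k+m-1}`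
are conjugate by a linear isomorphism `h` with `h ∘ F_{k,m} = G_{k,m} ∘ h` on `ℳ_{k,m}`. -/
theorem stmt6 (d : ℕ) (hd : 2 ≤ d) (β : ℂ) (hβd : β ^ d = 1) (hβ1 : β ≠ 1)
    (k m : ℕ) (hm : 1 ≤ m) (hn : 2 ≤ k + m - 1) :
    ∃ h : (Mspace β k m) ≃ₗ[ℂ] (Fin (k + m - 1) → ℂ),
      ∀ x : Mspace β k m, ∃ hy : Fmap β d k m ↑x ∈ Mspace β k m,
        h ⟨Fmap β d k m ↑x, hy⟩ = Gmap β d k m (h x) :=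
  stmt6_general d hd β hβd hβ1 k m hm
end
end

section
/- Let (k,m) ∈ ℕ × ℕ* and let z ∈ ℳ_{k,m} be a fixed point of F_{k,m}. Set P(t) = t^d + z_1. Then z_i = P^{∘i}(0) for all i ≥ 1 (so z is the critical orbit of P, and P is post-critically finite); moreover, if the sequence z is preperiodic of exact type (k',m'), then (k',m') ⪯ (k,m). -/
noncomputable section

/-!
Reading the fixed-point equation `F_{k,m}(z) = z` coordinatewise gives `z_{i+1} = z_i^d - κ`
for a constant `κ`; at `i = 0` it says `κ = -z_1`, so `z` is the orbit of `0` under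
`t ↦ t^d + z_1`. The minimal period `m'` divides every eventual period, in particular `m`.
If moreover `k' < k`, then `z_{k+m} = z_k`, and the equation `β z_{k+m} = z_k` defining
`ℋ_{k,m}` with `β ≠ 1` forces `z_k = 0 = z_0`: the orbit of `0` is then purely periodic of
period `k`, whence `k' = 0` and `m' ∣ k`.
-/

/-- `z` is preperiodic of type `(a, b)`, not necessarily exact. -/
def IsPeriodicFrom {α : Type*} (z : ℕ → α) (a b : ℕ) : Prop :=
  ∀ i, a + 1 ≤ i → z (i + b) = z i

namespace IsPeriodicFrom

variable {α : Type*} {z : ℕ → α} {a a' b c : ℕ}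

theorem mono (h : IsPeriodicFrom z a b) (ha : a ≤ a') : IsPeriodicFrom z a' b :=
  fun i hi => h i (by omega)

theorem mul (h : IsPeriodicFrom z a b) (j : ℕ) : IsPeriodicFrom z a (j * b) := by
  induction j with
  | zero => intro i _; simp
  | succ j ih =>
    intro i hi
    rw [Nat.succ_mul, ← Nat.add_assoc, h _ (by omega), ih i hi]

theorem mod (hb : IsPeriodicFrom z a b) (hc : IsPeriodicFrom z a c) :
    IsPeriodicFrom z a (b % c) := by
  intro i hi
  calc z (i + b % c) = z (i + b % c + b / c * c) := (hc.mul (b / c) _ (by omega)).symm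
    _ = z (i + b) := by rw [Nat.add_assoc, Nat.mod_add_div']
    _ = z i := hb i hi

theorem dvd_of_minimal (hc : 1 ≤ c) (hper : IsPeriodicFrom z a c)
    (hmin : ∀ a b, 1 ≤ b → IsPeriodicFrom z a b → c ≤ b) (hb : IsPeriodicFrom z a' b) :
    c ∣ b := by
  refine Nat.dvd_of_mod_eq_zero (by_contra fun hne => ?_)
  have hle := hmin _ _ (by omega)
    ((hb.mono (le_max_left a' a)).mod (hper.mono (le_max_right a' a)))
  have := Nat.mod_lt b hc
  omega

end IsPeriodicFrom

theorem eq_iterate_of_succ {α : Type*} {f : α → α} {z : ℕ → α}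
    (hs : ∀ i, z (i + 1) = f (z i)) : z = fun i => f^[i] (z 0) := by
  funext i
  induction i with
  | zero => rfl
  | succ i ih => rw [hs, ih, Function.iterate_succ_apply']

theorem isPeriodicFrom_zero_iterate {α : Type*} {f : α → α} {x : α} {k : ℕ}
    (hk : f^[k] x = x) : IsPeriodicFrom (fun i => f^[i] x) 0 k := by
  intro i _
  simp only [Function.iterate_add_apply, hk]

theorem Qmap_succ {d : ℕ} (hd : d ≠ 0) {x : Eseq} (hx : x 0 = 0) (i : ℕ) :
    Qmap d x (i + 1) = x i ^ d := by
  rcases i with _ | i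
  · simp [Qmap, hx, zero_pow hd]
  · simp [Qmap]

theorem succ_eq_of_Fmap_eq_self {β : ℂ} {d k m : ℕ} (hd : d ≠ 0) {z : Eseq} (hz0 : z 0 = 0)
    (hfix : Fmap β d k m z = z) (i : ℕ) : z (i + 1) = z i ^ d + z 1 := by
  have hFsucc : ∀ j, z (j + 1) = z j ^ d - kappa β k m (Qmap d z) := fun j => by
    rw [← Qmap_succ hd hz0, ← congrFun hfix (j + 1)]
    simp [Fmap, projH]
  rw [hFsucc i, hFsucc 0, hz0, zero_pow hd]
  ring

theorem Hspace.apply_eq_zero {β : ℂ} (hβ : β ≠ 1) {k m : ℕ} {x : Eseq}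
    (hx : x ∈ Hspace β k m) (hper : x (k + m) = x k) : x k = 0 := by
  have h : (β - 1) * x k = 0 := by linear_combination hx.2 - β * hper
  exact (mul_eq_zero.1 h).resolve_left (sub_ne_zero.2 hβ)

theorem stmt10_general (d : ℕ) (hd : 2 ≤ d) (β : ℂ) (hβ1 : β ≠ 1)
    (k m : ℕ) (hm : 1 ≤ m) (z : Eseq) (hz : z ∈ Mspace β k m)
    (hfix : Fmap β d k m z = z) :
    (∀ i, 1 ≤ i → z i = (fun t : ℂ => t ^ d + z 1)^[i] 0) ∧
    (∀ k' m' : ℕ, 1 ≤ m' →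
      (∀ i, k' + 1 ≤ i → z (i + m') = z i) →
      (∀ a b : ℕ, 1 ≤ b → (∀ i, a + 1 ≤ i → z (i + b) = z i) → k' ≤ a ∧ m' ≤ b) →
      (m' ∣ m ∧ (k' = k ∨ (k' = 0 ∧ m' ∣ k)))) := by
  obtain ⟨⟨hz0, hper⟩, hH⟩ := hz
  have horbit := eq_iterate_of_succ (f := fun t : ℂ => t ^ d + z 1)
    (succ_eq_of_Fmap_eq_self (by omega) hz0 hfix)
  rw [hz0] at horbit
  refine ⟨fun i _ => congrFun horbit i, fun k' m' hm' hper' hmin => ?_⟩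
  have hdvd : ∀ {a b}, IsPeriodicFrom z a b → m' ∣ b :=
    IsPeriodicFrom.dvd_of_minimal hm' hper' fun a b hb h => (hmin a b hb h).2
  refine ⟨hdvd hper, ?_⟩
  rcases (hmin k m hm hper).1.eq_or_lt with heq | hlt
  · exact Or.inl heq
  obtain ⟨q, hq⟩ := hdvd hper
  have hzk : z k = 0 :=
    Hspace.apply_eq_zero hβ1 hH (by rw [hq, mul_comm]; exact IsPeriodicFrom.mul hper' q k hlt)
  have hpure : IsPeriodicFrom z 0 k := by
    rw [horbit]
    exact isPeriodicFrom_zero_iterate (by rw [← congrFun horbit k, hzk])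
  exact Or.inr ⟨by have := (hmin 0 k (by omega) hpure).1; omega, hdvd hpure⟩

/-- if `z ∈ ℳ_{k,m}` is a fixed point of `F_{k,m}` and `P(t) = t^d + z_1`,
then `z_i = P^{∘i}(0)` for all `i ≥ 1` (so `z` is the critical orbit of `P` and `P` is
post-critically finite); moreover, if `z` is preperiodic of exact type `(k',m')`,
then `(k',m') ⪯ (k,m)`. -/
theorem stmt10 (d : ℕ) (hd : 2 ≤ d) (β : ℂ) (hβd : β ^ d = 1) (hβ1 : β ≠ 1)
    (k m : ℕ) (hm : 1 ≤ m) (z : Eseq) (hz : z ∈ Mspace β k m)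
    (hfix : Fmap β d k m z = z) :
    (∀ i, 1 ≤ i → z i = (fun t : ℂ => t ^ d + z 1)^[i] 0) ∧
    (∀ k' m' : ℕ, 1 ≤ m' →
      (∀ i, k' + 1 ≤ i → z (i + m') = z i) →
      (∀ a b : ℕ, 1 ≤ b → (∀ i, a + 1 ≤ i → z (i + b) = z i) → k' ≤ a ∧ m' ≤ b) →
      (m' ∣ m ∧ (k' = k ∨ (k' = 0 ∧ m' ∣ k)))) :=
  stmt10_general d hd β hβ1 k m hm z hz hfix
end
end
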